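/- The group Γ is not bi-orderable: there is no linear order ≤ on Γ such that x ≤ y implies wxz ≤ wyz for all w, x, y, z ∈ Γ. -/

import Mathlib

/-!
In a bi-ordered group square roots are unique: if `u < v` then `u * u < u * v < v * v`.
In `Γ` the elements `x = a² · bab⁻¹` and `y = bab⁻¹ · a²` are distinct but have the same square.
After one level of the wreath recursion, `x² = y²` reduces to `b` commuting with `a⁻¹ba` and
with `ab²a⁻¹`, and each of these is checked one level further down.
-/

namespace PinkGroup

mutual
  /-- forward action of the generator `a` -/
  def aF : List Bool → List Bool
    | [] => []
    | false :: w => true :: bF w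
    | true :: w => false :: w
  /-- forward action of the generator `b` -/
  def bF : List Bool → List Bool
    | [] => []
    | false :: w => false :: aF w
    | true :: w => true :: w
end

mutual
  /-- inverse of `aF` -/
  def aIF : List Bool → List Bool
    | [] => []
    | true :: w => false :: bIF w
    | false :: w => true :: w
  /-- inverse of `bF` -/
  def bIF : List Bool → List Bool
    | [] => []
    | false :: w => false :: aIF w
    | true :: w => true :: w
end

lemma inv_all (w : List Bool) :
    aF (aIF w) = w ∧ bF (bIF w) = w ∧ aIF (aF w) = w ∧ bIF (bF w) = w := by
  induction w with
  | nil => simp [aF, bF, aIF, bIF]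
  | cons x w ih =>
    cases x <;>
      simp [aF, bF, aIF, bIF, ih.1, ih.2.1, ih.2.2.1, ih.2.2.2]

/-- The generator `a` of Pink's group: `(1w)^a = 2 w^b`, `(2w)^a = 1w`
(where the letter `1` is `false` and the letter `2` is `true`). -/
def a : Equiv.Perm (List Bool) :=
  ⟨aF, aIF, fun w => (inv_all w).2.2.1, fun w => (inv_all w).1⟩

/-- The generator `b` of Pink's group: `(1w)^b = 1 w^a`, `(2w)^b = 2w`. -/
def b : Equiv.Perm (List Bool) :=
  ⟨bF, bIF, fun w => (inv_all w).2.2.2, fun w => (inv_all w).2.1⟩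

/-- Pink's group `Γ`, the iterated monodromy group of `z^2 - 1`. -/
def Gam : Subgroup (Equiv.Perm (List Bool)) := Subgroup.closure {a, b}

lemma a_mem : a ∈ Gam := Subgroup.subset_closure (by simp)

lemma b_mem : b ∈ Gam := Subgroup.subset_closure (by simp)

end PinkGroup

theorem eq_of_mul_self_eq_mul_self_of_biinvariant {G : Type*} [Group G] {r : G → G → Prop}
    [Std.Antisymm r] [Std.Total r] (hmul : ∀ w x y z : G, r x y → r (w * x * z) (w * y * z))
    {x y : G} (h : x * x = y * y) : x = y := by
  have of_rel : ∀ u v : G, u * u = v * v → r u v → u = v := fun u v huv hle => by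
    have h₁ : r (u * u) (u * v) := by simpa using hmul u u v 1 hle
    have h₂ : r (u * v) (u * u) := by simpa [huv] using hmul 1 u v v hle
    exact mul_left_cancel (antisymm h₁ h₂)
  rcases Std.Total.total (r := r) x y with hxy | hyx
  · exact of_rel x y h hxy
  · exact (of_rel y x h.symm hyx).symm

namespace PinkGroup

@[simp] lemma a_nil : a [] = [] := rfl
@[simp] lemma a_false_cons (w : List Bool) : a (false :: w) = true :: b w := rfl
@[simp] lemma a_true_cons (w : List Bool) : a (true :: w) = false :: w := rfl
@[simp] lemma b_nil : b [] = [] := rfl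
@[simp] lemma b_false_cons (w : List Bool) : b (false :: w) = false :: a w := rfl
@[simp] lemma b_true_cons (w : List Bool) : b (true :: w) = true :: w := rfl
@[simp] lemma a_inv_nil : a⁻¹ [] = [] := rfl
@[simp] lemma a_inv_true_cons (w : List Bool) : a⁻¹ (true :: w) = false :: b⁻¹ w := rfl
@[simp] lemma a_inv_false_cons (w : List Bool) : a⁻¹ (false :: w) = true :: w := rfl
@[simp] lemma b_inv_nil : b⁻¹ [] = [] := rfl
@[simp] lemma b_inv_false_cons (w : List Bool) : b⁻¹ (false :: w) = false :: a⁻¹ w := rfl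
@[simp] lemma b_inv_true_cons (w : List Bool) : b⁻¹ (true :: w) = true :: w := rfl

lemma commute_b_a_inv_mul_b_mul_a : Commute b (a⁻¹ * b * a) := by
  ext w : 1
  rcases w with _ | ⟨_ | _, w⟩ <;> simp [Equiv.Perm.mul_apply]

lemma commute_b_a_mul_b_sq_mul_a_inv : Commute b (a * b ^ 2 * a⁻¹) := by
  ext w : 1
  rcases w with _ | ⟨_ | _, w⟩ <;> simp [Equiv.Perm.mul_apply, sq]

def x : Equiv.Perm (List Bool) := a ^ 2 * (b * a * b⁻¹)

def y : Equiv.Perm (List Bool) := b * a * b⁻¹ * a ^ 2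

lemma x_mul_self_eq_y_mul_self : x * x = y * y := by
  have h₀ w := DFunLike.congr_fun commute_b_a_inv_mul_b_mul_a.eq w
  have h₁ w := DFunLike.congr_fun commute_b_a_mul_b_sq_mul_a_inv.eq w
  simp only [Equiv.Perm.mul_apply, sq, Equiv.Perm.inv_def] at h₀ h₁
  ext w : 1
  rcases w with _ | ⟨_ | _, w⟩ <;> simp [x, y, Equiv.Perm.mul_apply, sq, h₀, h₁]

lemma x_ne_y : x ≠ y := fun h => by
  simpa [x, y, Equiv.Perm.mul_apply, sq] using DFunLike.congr_fun h [false, false, false]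

lemma x_mem : x ∈ Gam := mul_mem (pow_mem a_mem 2) (mul_mem (mul_mem b_mem a_mem) (inv_mem b_mem))

lemma y_mem : y ∈ Gam := mul_mem (mul_mem (mul_mem b_mem a_mem) (inv_mem b_mem)) (pow_mem a_mem 2)

/-- The group `Γ` is not bi-orderable: there is no linear order on `Γ`
such that `x ≤ y` implies `w*x*z ≤ w*y*z` for all `w, z`. -/
theorem Gam_not_biorderable :
    ¬ ∃ le : ↥Gam → ↥Gam → Prop, IsLinearOrder ↥Gam le ∧
      ∀ w x y z : ↥Gam, le x y → le (w * x * z) (w * y * z) := by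
  rintro ⟨le, hlin, hmul⟩
  have hsq : (⟨x, x_mem⟩ : Gam) * ⟨x, x_mem⟩ = ⟨y, y_mem⟩ * ⟨y, y_mem⟩ :=
    Subtype.ext x_mul_self_eq_y_mul_self
  exact x_ne_y (congrArg Subtype.val (eq_of_mul_self_eq_mul_self_of_biinvariant hmul hsq))

end PinkGroup
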